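/- arXiv:2007.04469 — 3 statements merged into one kernel-verified Lean document; each statement's English description precedes it below -/
import Mathlib

section
/- Let G be a graph with edge set E, connectivity function γ, and let λ be a connectivity function on E such that λ(Y) = γ(Y) for every set Y that is e-controlled for some edge e. Then for any X ⊆ E and any edge e ∈ E − X, λ(X ∪ {e}) − λ(X) ≤ γ(X ∪ {e}) − γ(X). -/
variable {V E : Type*}

/-- The set of vertices incident with some edge of `X`, where `ends e` gives the
endvertices of the edge `e`. -/
def vertSet [Fintype V] [DecidableEq V] (ends : E → V × V) (X : Finset E) : Finset V :=
  Finset.univ.filter (fun v => ∃ e ∈ X, v = (ends e).1 ∨ v = (ends e).2)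

/-- The connectivity function of the graph: γ(X) = |V(X)| + |V(E−X)| − |V(E)|. -/
def gconn [Fintype V] [Fintype E] [DecidableEq V] [DecidableEq E] (ends : E → V × V)
    (X : Finset E) : ℤ :=
  (vertSet ends X).card + (vertSet ends Xᶜ).card - (vertSet ends (Finset.univ : Finset E)).card

/-- A vertex is incident with an edge if it is one of its endvertices. -/
def Incident (ends : E → V × V) (v : V) (e : E) : Prop :=
  v = (ends e).1 ∨ v = (ends e).2

/-- The boundary δ(X) = V(X) ∩ V(E−X). -/
def bdry [Fintype V] [Fintype E] [DecidableEq V] [DecidableEq E] (ends : E → V × V)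
    (X : Finset E) : Finset V :=
  vertSet ends X ∩ vertSet ends Xᶜ

/-- The star `S_v`: the set of edges incident with the vertex `v`. -/
def star' [Fintype E] (ends : E → V × V) [DecidableEq V] (v : V) : Finset E :=
  Finset.univ.filter (fun e => v = (ends e).1 ∨ v = (ends e).2)

/-- A subset `S'` of `S` is controlled if `S' = S`, `S' = ∅`, or `|S'| = 1`. -/
def Controlled (S S' : Finset E) : Prop :=
  S' ⊆ S ∧ (S' = S ∨ S' = ∅ ∨ S'.card = 1)

/-- A set `Y` is `e`-controlled if it is the union of three controlled subsets, one from
each of `S_u − {e}`, `S_v − {e}` and `{e}`, where `u` and `v` are the endvertices of `e`. -/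
def EControlled [Fintype E] [DecidableEq V] [DecidableEq E] (ends : E → V × V)
    (e : E) (Y : Finset E) : Prop :=
  ∃ A B C : Finset E,
    Controlled (star' ends (ends e).1 \ {e}) A ∧
    Controlled (star' ends (ends e).2 \ {e}) B ∧
    Controlled {e} C ∧
    Y = A ∪ B ∪ C

/-- A connectivity function: normalised, symmetric, submodular. -/
def IsConnFun [Fintype E] [DecidableEq E] (lam : Finset E → ℝ) : Prop :=
  lam ∅ = 0 ∧ (∀ X : Finset E, lam X = lam Xᶜ) ∧
    (∀ X Y : Finset E, lam (X ∪ Y) + lam (X ∩ Y) ≤ lam X + lam Y)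

lemma mem_vertSet [Fintype V] [DecidableEq V] (ends : E → V × V) (X : Finset E) (w : V) :
    w ∈ vertSet ends X ↔ ∃ f ∈ X, w = (ends f).1 ∨ w = (ends f).2 := by
  simp [vertSet]

lemma vertSet_union_singleton [Fintype V] [Fintype E] [DecidableEq V] [DecidableEq E]
    (ends : E → V × V) (Z : Finset E) (e : E) :
    vertSet ends (Z ∪ {e}) = {(ends e).1, (ends e).2} ∪ vertSet ends Z := by
  ext w
  simp only [mem_vertSet, Finset.mem_union, Finset.mem_singleton, Finset.mem_insert]
  constructor
  · rintro ⟨f, hf | hf, h⟩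
    · exact Or.inr ⟨f, hf, h⟩
    · subst hf; tauto
  · rintro ((h | h) | ⟨f, hf, h⟩)
    · exact ⟨e, Or.inr rfl, Or.inl h⟩
    · exact ⟨e, Or.inr rfl, Or.inr h⟩
    · exact ⟨f, Or.inl hf, h⟩

lemma mem_vertSet_iff_star [Fintype V] [Fintype E] [DecidableEq V] [DecidableEq E]
    (ends : E → V × V) (Z : Finset E) (w : V) :
    w ∈ vertSet ends Z ↔ (star' ends w ∩ Z).Nonempty := by
  rw [mem_vertSet]
  constructor
  · rintro ⟨f, hf, h⟩
    exact ⟨f, Finset.mem_inter.mpr ⟨Finset.mem_filter.mpr ⟨Finset.mem_univ f, h⟩, hf⟩⟩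
  · rintro ⟨f, hf⟩
    rw [Finset.mem_inter, star', Finset.mem_filter] at hf
    exact ⟨f, hf.2, hf.1.2⟩

lemma star_inter_eq [Fintype V] [Fintype E] [DecidableEq V] [DecidableEq E]
    (ends : E → V × V) (Z : Finset E) (e : E) (he : e ∉ Z) (w : V) :
    star' ends w ∩ Z = (star' ends w \ {e}) ∩ Z := by
  ext f
  simp only [Finset.mem_inter, Finset.mem_sdiff, Finset.mem_singleton]
  constructor
  · rintro ⟨h1, h2⟩; exact ⟨⟨h1, fun hfe => he (hfe ▸ h2)⟩, h2⟩
  · rintro ⟨⟨h1, _⟩, h2⟩; exact ⟨h1, h2⟩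

lemma star_inter_compl [Fintype V] [Fintype E] [DecidableEq V] [DecidableEq E]
    (ends : E → V × V) (Z : Finset E) (e : E) (w : V) :
    star' ends w ∩ (Zᶜ \ {e}) = (star' ends w \ {e}) \ Z := by
  ext f
  simp only [Finset.mem_inter, Finset.mem_sdiff, Finset.mem_singleton, Finset.mem_compl]
  tauto

lemma mem_vertSet_iff₁ [Fintype V] [Fintype E] [DecidableEq V] [DecidableEq E]
    (ends : E → V × V) (Z : Finset E) (e : E) (he : e ∉ Z) (w : V) :
    w ∈ vertSet ends Z ↔ ((star' ends w \ {e}) ∩ Z).Nonempty := by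
  rw [mem_vertSet_iff_star, star_inter_eq ends Z e he]

lemma mem_vertSet_iff₂ [Fintype V] [Fintype E] [DecidableEq V] [DecidableEq E]
    (ends : E → V × V) (Z : Finset E) (e : E) (w : V) :
    w ∈ vertSet ends (Zᶜ \ {e}) ↔ ¬ (star' ends w \ {e}) ⊆ Z := by
  rw [mem_vertSet_iff_star, star_inter_compl, Finset.sdiff_nonempty]

lemma gconn_incr [Fintype V] [Fintype E] [DecidableEq V] [DecidableEq E]
    (ends : E → V × V) (Z : Finset E) (e : E) (he : e ∉ Z) :
    gconn ends (Z ∪ {e}) - gconn ends Z =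
      ((({(ends e).1, (ends e).2} : Finset V) \ vertSet ends Z).card : ℤ)
        - ((({(ends e).1, (ends e).2} : Finset V) \ vertSet ends (Zᶜ \ {e})).card : ℤ) := by
  have h1 : (Z ∪ {e})ᶜ = Zᶜ \ {e} := by
    ext f; simp only [Finset.mem_compl, Finset.mem_union, Finset.mem_sdiff,
      Finset.mem_singleton]; tauto
  have h3 : vertSet ends Zᶜ = {(ends e).1, (ends e).2} ∪ vertSet ends (Zᶜ \ {e}) := by
    have h4 : Zᶜ = (Zᶜ \ {e}) ∪ {e} := by
      rw [Finset.sdiff_union_of_subset]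
      simpa using he
    conv_lhs => rw [h4]
    exact vertSet_union_singleton ends _ e
  unfold gconn
  rw [h1, vertSet_union_singleton, h3, ← Finset.card_sdiff_add_card, ← Finset.card_sdiff_add_card]
  push_cast
  ring

lemma gconn_incr_eq [Fintype V] [Fintype E] [DecidableEq V] [DecidableEq E]
    (ends : E → V × V) (e : E) (Z Z' : Finset E) (he : e ∉ Z) (he' : e ∉ Z')
    (h : ∀ w : V, w = (ends e).1 ∨ w = (ends e).2 →
      (((star' ends w \ {e}) ∩ Z).Nonempty ↔ ((star' ends w \ {e}) ∩ Z').Nonempty) ∧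
      ((star' ends w \ {e}) ⊆ Z ↔ (star' ends w \ {e}) ⊆ Z')) :
    gconn ends (Z ∪ {e}) - gconn ends Z = gconn ends (Z' ∪ {e}) - gconn ends Z' := by
  rw [gconn_incr ends Z e he, gconn_incr ends Z' e he']
  have e1 : ({(ends e).1, (ends e).2} : Finset V) \ vertSet ends Z
      = ({(ends e).1, (ends e).2} : Finset V) \ vertSet ends Z' := by
    ext w
    simp only [Finset.mem_sdiff, Finset.mem_insert, Finset.mem_singleton]
    constructor
    · rintro ⟨hw, hmem⟩
      refine ⟨hw, fun hc => hmem ?_⟩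
      rw [mem_vertSet_iff₁ ends Z e he] at *
      rw [mem_vertSet_iff₁ ends Z' e he'] at hc
      exact ((h w hw).1).mpr hc
    · rintro ⟨hw, hmem⟩
      refine ⟨hw, fun hc => hmem ?_⟩
      rw [mem_vertSet_iff₁ ends Z e he] at hc
      rw [mem_vertSet_iff₁ ends Z' e he']
      exact ((h w hw).1).mp hc
  have e2 : ({(ends e).1, (ends e).2} : Finset V) \ vertSet ends (Zᶜ \ {e})
      = ({(ends e).1, (ends e).2} : Finset V) \ vertSet ends (Z'ᶜ \ {e}) := by
    ext w
    simp only [Finset.mem_sdiff, Finset.mem_insert, Finset.mem_singleton]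
    constructor
    · rintro ⟨hw, hmem⟩
      refine ⟨hw, fun hc => hmem ?_⟩
      rw [mem_vertSet_iff₂ ends Z' e] at hc
      rw [mem_vertSet_iff₂ ends Z e]
      exact fun hs => hc (((h w hw).2).mp hs)
    · rintro ⟨hw, hmem⟩
      refine ⟨hw, fun hc => hmem ?_⟩
      rw [mem_vertSet_iff₂ ends Z e] at hc
      rw [mem_vertSet_iff₂ ends Z' e]
      exact fun hs => hc (((h w hw).2).mpr hs)
  rw [e1, e2]

lemma choose_controlled [DecidableEq E] (A X : Finset E) :
    ∃ A' : Finset E, A' ⊆ X ∧ Controlled A A' ∧ (A ⊆ X → A' = A) ∧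
      ((A ∩ X).Nonempty → (A ∩ A').Nonempty) := by
  by_cases hAX : A ⊆ X
  · refine ⟨A, hAX, ⟨le_refl A, Or.inl rfl⟩, fun _ => rfl, fun h => ?_⟩
    rw [Finset.inter_self]
    obtain ⟨a, ha⟩ := h
    exact ⟨a, (Finset.mem_inter.mp ha).1⟩
  · by_cases hne : (A ∩ X).Nonempty
    · obtain ⟨a, ha⟩ := hne
      rw [Finset.mem_inter] at ha
      refine ⟨{a}, Finset.singleton_subset_iff.mpr ha.2,
        ⟨Finset.singleton_subset_iff.mpr ha.1, Or.inr (Or.inr (Finset.card_singleton a))⟩,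
        fun h => absurd h hAX, fun _ => ⟨a, Finset.mem_inter.mpr ⟨ha.1, Finset.mem_singleton_self a⟩⟩⟩
    · exact ⟨∅, Finset.empty_subset X, ⟨Finset.empty_subset A, Or.inr (Or.inl rfl)⟩,
        fun h => absurd h hAX, fun h => absurd h hne⟩

/-- If the connectivity function `λ` agrees with `γ` on all `e`-controlled sets, then
λ(X ∪ {e}) − λ(X) ≤ γ(X ∪ {e}) − γ(X) for every `X` and `e ∉ X`. -/
theorem stmt4 [Fintype V] [Fintype E] [DecidableEq V] [DecidableEq E]
    (ends : E → V × V) (lam : Finset E → ℝ) (hlam : IsConnFun lam)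
    (hagree : ∀ (e : E) (Y : Finset E), EControlled ends e Y → lam Y = (gconn ends Y : ℝ))
    (X : Finset E) (e : E) (he : e ∉ X) :
    lam (X ∪ {e}) - lam X ≤ (gconn ends (X ∪ {e}) : ℝ) - (gconn ends X : ℝ) := by
  obtain ⟨hlam0, hlamsym, hlamsub⟩ := hlam
  obtain ⟨A', hA'X, hA'c, hA'full, hA'ne⟩ :=
    choose_controlled (star' ends (ends e).1 \ {e}) X
  obtain ⟨B', hB'X, hB'c, hB'full, hB'ne⟩ :=
    choose_controlled (star' ends (ends e).2 \ {e}) X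
  set Y := A' ∪ B' with hY
  have hYX : Y ⊆ X := Finset.union_subset hA'X hB'X
  have heY : e ∉ Y := fun h => he (hYX h)
  have hYec : EControlled ends e Y :=
    ⟨A', B', ∅, hA'c, hB'c, ⟨Finset.empty_subset _, Or.inr (Or.inl rfl)⟩,
      by rw [Finset.union_empty]⟩
  have hYe2 : EControlled ends e (Y ∪ {e}) :=
    ⟨A', B', {e}, hA'c, hB'c, ⟨Finset.Subset.refl _, Or.inl rfl⟩, rfl⟩
  have hsub := hlamsub X (Y ∪ {e})
  have hXU : X ∪ (Y ∪ {e}) = X ∪ {e} := by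
    rw [← Finset.union_assoc, Finset.union_eq_left.mpr hYX]
  have hXI : X ∩ (Y ∪ {e}) = Y := by
    ext f
    simp only [Finset.mem_inter, Finset.mem_union, Finset.mem_singleton]
    constructor
    · rintro ⟨hfX, hf | rfl⟩
      · exact hf
      · exact absurd hfX he
    · intro hf; exact ⟨hYX hf, Or.inl hf⟩
  rw [hXU, hXI] at hsub
  have key : lam (Y ∪ {e}) - lam Y = (gconn ends (Y ∪ {e}) : ℝ) - (gconn ends Y : ℝ) := by
    rw [hagree e _ hYe2, hagree e _ hYec]
  have geq : gconn ends (Y ∪ {e}) - gconn ends Y = gconn ends (X ∪ {e}) - gconn ends X := by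
    apply gconn_incr_eq ends e Y X heY he
    intro w hw
    have hstar : star' ends w \ {e} = star' ends (ends e).1 \ {e} ∨
        star' ends w \ {e} = star' ends (ends e).2 \ {e} := by
      rcases hw with h | h
      · left; rw [h]
      · right; rw [h]
    rcases hstar with h | h <;> rw [h]
    · refine ⟨⟨fun hne => hne.mono
        (Finset.inter_subset_inter (Finset.Subset.refl _) hYX), fun hne => ?_⟩,
        fun hs => hs.trans hYX, fun hs => ?_⟩
      · exact (hA'ne hne).mono
          (Finset.inter_subset_inter (Finset.Subset.refl _) Finset.subset_union_left)
      · rw [← hA'full hs]; exact Finset.subset_union_left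
    · refine ⟨⟨fun hne => hne.mono
        (Finset.inter_subset_inter (Finset.Subset.refl _) hYX), fun hne => ?_⟩,
        fun hs => hs.trans hYX, fun hs => ?_⟩
      · exact (hB'ne hne).mono
          (Finset.inter_subset_inter (Finset.Subset.refl _) Finset.subset_union_right)
      · rw [← hB'full hs]; exact Finset.subset_union_right
  have geq' : (gconn ends (Y ∪ {e}) : ℝ) - (gconn ends Y : ℝ)
      = (gconn ends (X ∪ {e}) : ℝ) - (gconn ends X : ℝ) := by exact_mod_cast geq
  linarith [key, geq', hsub]
end

section
/- Let S(I) be the rank-n spike associated with an independent set I of the hypercube graph H_n on the set of transversals. For X ⊆ E_n: if X includes no leg and is disjoint from some leg then r(X) = |X|; if X includes some leg and is disjoint from some other leg then r(X) = l(X) + 1; if X includes some leg and meets all legs then r(X) = n; if X includes no leg but meets all legs (so X is a transversal), then r(X) = n−1 if X ∈ I and r(X) = n otherwise. -/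
/-- The ground set of a rank-`n` spike: `n` disjoint legs, where the leg `i` consists of
`x_i = (i, true)` and `y_i = (i, false)`. -/
abbrev En (n : ℕ) := Fin n × Bool

/-- The `i`-th leg `L_i = {x_i, y_i}`. -/
def leg (n : ℕ) (i : Fin n) : Set (En n) := {(i, true), (i, false)}

/-- A transversal: a set containing exactly one element of each leg. -/
def IsTransversal {n : ℕ} (X : Set (En n)) : Prop :=
  ∀ i : Fin n, ((i, true) ∈ X ∧ (i, false) ∉ X) ∨ ((i, true) ∉ X ∧ (i, false) ∈ X)

/-- The hypercube graph `H_n` on transversals: two transversals are adjacent iff they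
differ in exactly one element (i.e. their symmetric difference has two elements). -/
def Hn (n : ℕ) : SimpleGraph (Set (En n)) where
  Adj X Y := IsTransversal X ∧ IsTransversal Y ∧ (symmDiff X Y).ncard = 2
  symm := ⟨fun X Y ⟨h1, h2, h3⟩ => ⟨h2, h1, by rwa [symmDiff_comm]⟩⟩
  loopless := ⟨fun X ⟨_, _, h3⟩ => by
    simp [symmDiff_self, Set.bot_eq_empty] at h3⟩

/-- `I` is an independent set of the hypercube graph `H_n`. -/
def IndepInHn (n : ℕ) (I : Set (Set (En n))) : Prop :=
  (∀ X ∈ I, IsTransversal X) ∧ ∀ X ∈ I, ∀ Y ∈ I, ¬ (Hn n).Adj X Y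

/-- `l(X)`: the number of legs which `X` meets. -/
noncomputable def legCount {n : ℕ} (X : Set (En n)) : ℕ :=
  Set.ncard {i : Fin n | (i, true) ∈ X ∨ (i, false) ∈ X}

/-- The rank of a set `X` in a matroid `M`: the largest cardinality of an independent
subset of `X`. -/
noncomputable def mrank {α : Type*} (M : Matroid α) (X : Set α) : ℕ :=
  sSup {k | ∃ I, M.Indep I ∧ I ⊆ X ∧ I.ncard = k}

/-- The connectivity function of a matroid: μ_M(X) = r(X) + r(E−X) − r(E). -/
noncomputable def mconn {α : Type*} (M : Matroid α) (X : Set α) : ℤ :=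
  (mrank M X : ℤ) + (mrank M (M.E \ X) : ℤ) - (mrank M M.E : ℤ)

/-- A circuit of a matroid: a minimal dependent subset of the ground set. -/
def IsCircuit {α : Type*} (M : Matroid α) (C : Set α) : Prop :=
  C ⊆ M.E ∧ ¬ M.Indep C ∧ ∀ D ⊂ C, M.Indep D

/-- The circuits `{x_i, y_i, x_j, y_j}` for `i < j` (i.e. unions of two distinct legs). -/
def LegPairs (n : ℕ) : Set (Set (En n)) :=
  {C | ∃ i j : Fin n, i ≠ j ∧ C = leg n i ∪ leg n j}

/-- The circuit collection of the spike `S(I)`: unions of two legs, the transversals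
in `I`, and all `(n+1)`-element sets containing none of the preceding circuits. -/
def SpikeCircuits (n : ℕ) (I : Set (Set (En n))) : Set (Set (En n)) :=
  (LegPairs n ∪ I) ∪ {C | C.ncard = n + 1 ∧ ∀ D ∈ LegPairs n ∪ I, ¬ D ⊆ C}

/-!
A set is independent in `S(I)` iff it has at most `n` elements, contains at most one leg and
contains no member of `I`. A set `J` containing at most one leg has `|J| ≤ l(J) + 1`, and
`|J| = l(J)` if it contains none; with `|J| ≤ n` and the dependence of the members of `I` this
gives the upper bounds. For the lower bounds, a set containing no leg and missing some leg
contains no transversal, so it is independent; a set containing the leg `L_i` and missing some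
leg has an independent subset of size `l(X) + 1`, obtained by keeping one element of each leg it
meets and both elements of `L_i`. The remaining cases reduce to these two by deleting one leg
from `X`.
-/

open Set

section Legs

variable {n : ℕ}

lemma leg_subset_iff {i : Fin n} {X : Set (En n)} :
    leg n i ⊆ X ↔ (i, true) ∈ X ∧ (i, false) ∈ X := by
  simp [leg, insert_subset_iff]

lemma disjoint_leg_iff {i : Fin n} {X : Set (En n)} :
    Disjoint (leg n i) X ↔ (i, true) ∉ X ∧ (i, false) ∉ X := by
  simp [leg]

lemma disjoint_leg_leg {i j : Fin n} (h : i ≠ j) : Disjoint (leg n i) (leg n j) := by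
  simp [leg, Ne.symm h]

lemma legCount_eq_ncard_image_fst (X : Set (En n)) : legCount X = (Prod.fst '' X).ncard := by
  rw [legCount]
  congr 1
  ext i
  simp [or_comm]

lemma legCount_mono {X Y : Set (En n)} (h : X ⊆ Y) : legCount X ≤ legCount Y := by
  simp only [legCount_eq_ncard_image_fst]
  exact ncard_le_ncard (image_mono h)

lemma legCount_le (X : Set (En n)) : legCount X ≤ n := by
  simpa [legCount_eq_ncard_image_fst] using ncard_le_card (Prod.fst '' X)

lemma legCount_add_one_le_of_disjoint {j : Fin n} {X : Set (En n)}
    (hj : Disjoint (leg n j) X) : legCount X + 1 ≤ n := by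
  have hsub : Prod.fst '' X ⊆ {j}ᶜ := by
    rintro _ ⟨⟨k, b⟩, hkb, rfl⟩ rfl
    cases b <;> simp_all [disjoint_leg_iff]
  have := ncard_le_ncard hsub
  rw [ncard_compl, ncard_singleton, Nat.card_eq_fintype_card, Fintype.card_fin] at this
  rw [legCount_eq_ncard_image_fst]
  have : 0 < n := j.pos
  omega

lemma legCount_eq_of_forall_not_disjoint {X : Set (En n)}
    (h : ∀ i, ¬ Disjoint (leg n i) X) : legCount X = n := by
  have : Prod.fst '' X = univ := by
    refine eq_univ_of_forall fun i => ?_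
    obtain ⟨b, hb⟩ : ∃ b, (i, b) ∈ X := by
      by_contra! hX
      exact h i (disjoint_leg_iff.mpr ⟨hX true, hX false⟩)
    exact ⟨_, hb, rfl⟩
  simp [legCount_eq_ncard_image_fst, this]

lemma legCount_sdiff_leg_add_one {j : Fin n} {X : Set (En n)} (hj : ¬ Disjoint (leg n j) X) :
    legCount (X \ leg n j) + 1 = legCount X := by
  have hj' : j ∈ Prod.fst '' X := by
    by_contra hX
    exact hj (disjoint_leg_iff.mpr ⟨fun h => hX ⟨_, h, rfl⟩, fun h => hX ⟨_, h, rfl⟩⟩)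
  have : Prod.fst '' (X \ leg n j) = Prod.fst '' X \ {j} := by
    ext i
    simp only [mem_image, mem_sdiff, mem_singleton_iff, leg]
    aesop
  rw [legCount_eq_ncard_image_fst, legCount_eq_ncard_image_fst, this,
    ncard_sdiff_singleton_add_one hj']

lemma ncard_eq_legCount {X : Set (En n)} (h : ∀ i, ¬ leg n i ⊆ X) : X.ncard = legCount X := by
  rw [legCount_eq_ncard_image_fst, InjOn.ncard_image]
  rintro ⟨i, b⟩ hb ⟨i', b'⟩ hb' (rfl : i = i')
  cases b <;> cases b' <;> simp_all [leg_subset_iff]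

lemma ncard_le_legCount_add_one {J : Set (En n)}
    (hJ : ∀ i j, leg n i ⊆ J → leg n j ⊆ J → i = j) : J.ncard ≤ legCount J + 1 := by
  by_cases hleg : ∃ i, leg n i ⊆ J
  · obtain ⟨i, hi⟩ := hleg
    have hno : ∀ k, ¬ leg n k ⊆ J \ {(i, false)} := fun k hk => by
      obtain rfl := hJ k i (hk.trans sdiff_subset) hi
      simpa using (leg_subset_iff.mp hk).2
    have hmem : (i, false) ∈ J := (leg_subset_iff.mp hi).2
    have := ncard_sdiff_singleton_add_one hmem
    have := legCount_mono (sdiff_subset : J \ {(i, false)} ⊆ J)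
    rw [ncard_eq_legCount hno] at *
    omega
  · push Not at hleg
    exact (ncard_eq_legCount hleg).le.trans (Nat.le_succ _)

lemma IsTransversal.not_leg_subset {T : Set (En n)} (hT : IsTransversal T) (i : Fin n) :
    ¬ leg n i ⊆ T := by
  rw [leg_subset_iff]
  rcases hT i with h | h <;> tauto

lemma IsTransversal.not_disjoint_leg {T : Set (En n)} (hT : IsTransversal T) (i : Fin n) :
    ¬ Disjoint (leg n i) T := by
  rw [disjoint_leg_iff]
  rcases hT i with h | h <;> tauto

lemma IsTransversal.ncard_eq {T : Set (En n)} (hT : IsTransversal T) : T.ncard = n := by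
  rw [ncard_eq_legCount hT.not_leg_subset,
    legCount_eq_of_forall_not_disjoint hT.not_disjoint_leg]

lemma isTransversal_of_forall {X : Set (En n)} (hleg : ∀ i, ¬ leg n i ⊆ X)
    (hmeet : ∀ i, ¬ Disjoint (leg n i) X) : IsTransversal X := by
  intro i
  have h1 := hleg i
  have h2 := hmeet i
  rw [leg_subset_iff] at h1
  rw [disjoint_leg_iff] at h2
  tauto

lemma IsTransversal.not_subset_of_disjoint {T X : Set (En n)} (hT : IsTransversal T)
    {j : Fin n} (hj : Disjoint (leg n j) X) : ¬ T ⊆ X :=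
  fun hTX => hT.not_disjoint_leg j (hj.mono_right hTX)

def partialTransversal (X : Set (En n)) : Set (En n) :=
  X \ {e | e.2 = false ∧ (e.1, true) ∈ X}

lemma partialTransversal_subset (X : Set (En n)) : partialTransversal X ⊆ X := sdiff_subset

lemma not_leg_subset_partialTransversal (X : Set (En n)) (i : Fin n) :
    ¬ leg n i ⊆ partialTransversal X := by
  simp +contextual [leg_subset_iff, partialTransversal]

lemma legCount_partialTransversal (X : Set (En n)) :
    legCount (partialTransversal X) = legCount X := by
  simp only [legCount, partialTransversal]
  congr 1
  ext i
  simp only [mem_ofPred_eq, mem_sdiff]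
  tauto

end Legs

section Rank

variable {α : Type*} {M : Matroid α}

lemma isCircuit_iff_matroid_isCircuit {C : Set α} : IsCircuit M C ↔ M.IsCircuit C := by
  rw [Matroid.isCircuit_iff_forall_ssubset, Matroid.dep_iff, IsCircuit]
  tauto

lemma mrank_le {X : Set α} {k : ℕ} (h : ∀ J, M.Indep J → J ⊆ X → J.ncard ≤ k) :
    mrank M X ≤ k :=
  csSup_le ⟨0, ∅, M.empty_indep, empty_subset X, ncard_empty α⟩ fun _ ⟨J, hJ, hJX, hk⟩ =>
    hk ▸ h J hJ hJX

lemma Matroid.Indep.ncard_le_mrank [Finite α] {J X : Set α} (hJ : M.Indep J) (hJX : J ⊆ X) :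
    J.ncard ≤ mrank M X :=
  le_csSup ⟨X.ncard, fun _ ⟨_, _, hIX, hk⟩ => hk ▸ ncard_le_ncard hIX⟩ ⟨J, hJ, hJX, rfl⟩

lemma mrank_mono [Finite α] {X Y : Set α} (h : X ⊆ Y) : mrank M X ≤ mrank M Y :=
  mrank_le fun _ hJ hJX => hJ.ncard_le_mrank (hJX.trans h)

lemma Matroid.Indep.mrank_eq_ncard [Finite α] {X : Set α} (hX : M.Indep X) :
    mrank M X = X.ncard :=
  (mrank_le fun _ _ hJX => ncard_le_ncard hJX).antisymm (hX.ncard_le_mrank subset_rfl)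

end Rank

section Spike

variable {n : ℕ} {I : Set (Set (En n))}

def SpikeIndep (n : ℕ) (I : Set (Set (En n))) (J : Set (En n)) : Prop :=
  J.ncard ≤ n ∧ (∀ i j, leg n i ⊆ J → leg n j ⊆ J → i = j) ∧ ∀ D ∈ I, ¬ D ⊆ J

lemma indep_iff_spikeIndep {M : Matroid (En n)} (hE : M.E = univ)
    (hC : ∀ C, IsCircuit M C ↔ C ∈ SpikeCircuits n I) {J : Set (En n)} :
    M.Indep J ↔ SpikeIndep n I J := by
  rw [Matroid.indep_iff_forall_subset_not_isCircuit (hE ▸ subset_univ J)]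
  simp only [← isCircuit_iff_matroid_isCircuit, hC]
  constructor
  · intro h
    refine ⟨?_, fun i j hi hj => ?_, fun D hD hDJ => h D hDJ (Or.inl (Or.inr hD))⟩
    · by_contra! hcard
      obtain ⟨C, hCJ, hC⟩ := exists_subset_card_eq (show n + 1 ≤ J.ncard from hcard)
      by_cases hD : ∃ D ∈ LegPairs n ∪ I, D ⊆ C
      · obtain ⟨D, hD, hDC⟩ := hD
        exact h D (hDC.trans hCJ) (Or.inl hD)
      · push Not at hD
        exact h C hCJ (Or.inr ⟨hC, hD⟩)
    · by_contra hij
      exact h _ (union_subset hi hj) (Or.inl (Or.inl ⟨i, j, hij, rfl⟩))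
  · rintro ⟨hcard, hlegs, hI⟩ C hCJ (⟨⟨i, j, hij, rfl⟩ | hCI⟩ | ⟨hC, -⟩)
    · exact hij (hlegs i j (subset_union_left.trans hCJ) (subset_union_right.trans hCJ))
    · exact hI C hCI hCJ
    · have := ncard_le_ncard hCJ
      omega

variable {M : Matroid (En n)}

lemma mrank_le_legCount_add_one (hM : ∀ J, M.Indep J ↔ SpikeIndep n I J) (X : Set (En n)) :
    mrank M X ≤ legCount X + 1 :=
  mrank_le fun J hJ hJX =>
    (ncard_le_legCount_add_one ((hM J).mp hJ).2.1).trans (Nat.succ_le_succ (legCount_mono hJX))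

lemma mrank_le_rank (hM : ∀ J, M.Indep J ↔ SpikeIndep n I J) (X : Set (En n)) :
    mrank M X ≤ n :=
  mrank_le fun J hJ _ => ((hM J).mp hJ).1

lemma mrank_eq_ncard_of_disjoint (hM : ∀ J, M.Indep J ↔ SpikeIndep n I J)
    (hIT : ∀ D ∈ I, IsTransversal D) {X : Set (En n)} (hno : ∀ i, ¬ leg n i ⊆ X) {j : Fin n}
    (hj : Disjoint (leg n j) X) : mrank M X = X.ncard := by
  refine ((hM X).mpr ⟨?_, fun i _ hi => absurd hi (hno i), ?_⟩).mrank_eq_ncard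
  · exact (ncard_eq_legCount hno).trans_le (legCount_le X)
  · exact fun D hD => (hIT D hD).not_subset_of_disjoint hj

lemma mrank_eq_legCount_add_one (hM : ∀ J, M.Indep J ↔ SpikeIndep n I J)
    (hIT : ∀ D ∈ I, IsTransversal D) {X : Set (En n)} {i j : Fin n} (hi : leg n i ⊆ X)
    (hj : Disjoint (leg n j) X) : mrank M X = legCount X + 1 := by
  set J := insert (i, false) (partialTransversal X)
  have hJX : J ⊆ X := insert_subset (leg_subset_iff.mp hi).2 (partialTransversal_subset X)
  have hnot : (i, false) ∉ partialTransversal X := by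
    simp [partialTransversal, (leg_subset_iff.mp hi).1]
  have hJcard : J.ncard = legCount X + 1 := by
    rw [ncard_insert_of_notMem hnot, ncard_eq_legCount (not_leg_subset_partialTransversal X),
      legCount_partialTransversal]
  have hlegs : ∀ k, leg n k ⊆ J → k = i := fun k hk => by
    by_contra hki
    refine not_leg_subset_partialTransversal X k ((subset_insert_iff_of_notMem ?_).mp hk)
    simp [leg, Ne.symm hki]
  have hJ : SpikeIndep n I J :=
    ⟨hJcard ▸ legCount_add_one_le_of_disjoint hj,
      fun a b ha hb => (hlegs a ha).trans (hlegs b hb).symm,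
      fun D hD => (hIT D hD).not_subset_of_disjoint (hj.mono_right hJX)⟩
  exact (mrank_le_legCount_add_one hM X).antisymm (hJcard ▸ ((hM J).mpr hJ).ncard_le_mrank hJX)

lemma mrank_eq_rank_of_leg_subset (hM : ∀ J, M.Indep J ↔ SpikeIndep n I J)
    (hIT : ∀ D ∈ I, IsTransversal D) (hn : 1 < n) {X : Set (En n)} {i : Fin n}
    (hi : leg n i ⊆ X) (hall : ∀ j, ¬ Disjoint (leg n j) X) : mrank M X = n := by
  obtain ⟨j, hji⟩ : ∃ j, j ≠ i := Fintype.exists_ne_of_one_lt_card (by simpa using hn) i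
  have hY : mrank M (X \ leg n j) = n := by
    rw [mrank_eq_legCount_add_one hM hIT (subset_sdiff.mpr ⟨hi, disjoint_leg_leg hji.symm⟩)
      disjoint_sdiff_right, legCount_sdiff_leg_add_one (hall j),
      legCount_eq_of_forall_not_disjoint hall]
  exact (mrank_le_rank hM X).antisymm (hY.symm.trans_le (mrank_mono sdiff_subset))

lemma mrank_eq_rank_sub_one_of_mem (hM : ∀ J, M.Indep J ↔ SpikeIndep n I J)
    (hIT : ∀ D ∈ I, IsTransversal D) (hn : 0 < n) {X : Set (En n)} (hX : X ∈ I) :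
    mrank M X = n - 1 := by
  have hT := hIT X hX
  have hY : mrank M (X \ leg n ⟨0, hn⟩) = n - 1 := by
    have hno : ∀ k, ¬ leg n k ⊆ X \ leg n ⟨0, hn⟩ :=
      fun k hk => hT.not_leg_subset k (hk.trans sdiff_subset)
    have := legCount_sdiff_leg_add_one (hT.not_disjoint_leg ⟨0, hn⟩)
    rw [legCount_eq_of_forall_not_disjoint hT.not_disjoint_leg] at this
    rw [mrank_eq_ncard_of_disjoint hM hIT hno disjoint_sdiff_right, ncard_eq_legCount hno]
    omega
  refine le_antisymm (mrank_le fun J hJ hJX => ?_) (hY.symm.trans_le (mrank_mono sdiff_subset))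
  have hJX' : J ⊂ X := hJX.ssubset_of_ne <| by
    rintro rfl
    exact ((hM J).mp hJ).2.2 J hX subset_rfl
  have := ncard_lt_ncard hJX'
  rw [hT.ncard_eq] at this
  omega

lemma mrank_eq_rank_of_notMem (hM : ∀ J, M.Indep J ↔ SpikeIndep n I J)
    (hIT : ∀ D ∈ I, IsTransversal D) {X : Set (En n)} (hT : IsTransversal X) (hX : X ∉ I) :
    mrank M X = n := by
  have hindep : SpikeIndep n I X := by
    refine ⟨hT.ncard_eq.le, fun i _ hi => absurd hi (hT.not_leg_subset i), fun D hD hDX => ?_⟩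
    have : D = X := eq_of_subset_of_ncard_le hDX (by rw [hT.ncard_eq, (hIT D hD).ncard_eq])
    exact hX (this ▸ hD)
  rw [((hM X).mpr hindep).mrank_eq_ncard, hT.ncard_eq]

end Spike

/-- The rank function of the spike `S(I)`. -/
theorem stmt8 {n : ℕ} (hn : 2 < n) (I : Set (Set (En n))) (hI : IndepInHn n I)
    (M : Matroid (En n)) (hE : M.E = Set.univ)
    (hC : ∀ C, IsCircuit M C ↔ C ∈ SpikeCircuits n I) (X : Set (En n)) :
    ((¬ ∃ i, leg n i ⊆ X) → (∃ i, Disjoint (leg n i) X) → mrank M X = X.ncard) ∧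
    ((∃ i, leg n i ⊆ X) → (∃ j, Disjoint (leg n j) X) → mrank M X = legCount X + 1) ∧
    ((∃ i, leg n i ⊆ X) → (∀ i, ¬ Disjoint (leg n i) X) → mrank M X = n) ∧
    ((¬ ∃ i, leg n i ⊆ X) → (∀ i, ¬ Disjoint (leg n i) X) →
      (X ∈ I → mrank M X = n - 1) ∧ (X ∉ I → mrank M X = n)) := by
  have hM : ∀ J, M.Indep J ↔ SpikeIndep n I J := fun _ => indep_iff_spikeIndep hE hC
  have hIT := hI.1
  refine ⟨fun hno ⟨j, hj⟩ => ?_, fun ⟨i, hi⟩ ⟨j, hj⟩ => ?_, fun ⟨i, hi⟩ hall => ?_,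
    fun hno hall => ⟨fun hX => ?_, fun hX => ?_⟩⟩
  · exact mrank_eq_ncard_of_disjoint hM hIT (not_exists.mp hno) hj
  · exact mrank_eq_legCount_add_one hM hIT hi hj
  · exact mrank_eq_rank_of_leg_subset hM hIT (by omega) hi hall
  · exact mrank_eq_rank_sub_one_of_mem hM hIT (by omega) hX
  · exact mrank_eq_rank_of_notMem hM hIT (isTransversal_of_forall (not_exists.mp hno) hall) hX
end

section
/- Let n be odd and λ a spiky function on E_n. Define I to be the set of transversals X with λ(X) = n−2, together with those even-parity transversals X with λ(X) = n−1 (parity of X is the parity of |{i : x_i ∈ X}|). Then I is an independent set in H_n, and for every transversal X, λ(X) = n − |I ∩ {X, E_n − X}|. -/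
open Classical in
/-- The rank function of the free spike `S(∅)` (every rank-`n` spike has this rank
function away from the transversals). -/
noncomputable def freeSpikeRank (n : ℕ) (X : Set (En n)) : ℕ :=
  if ∀ i : Fin n, ¬ Disjoint (leg n i) X then n
  else if ∃ i, leg n i ⊆ X then legCount X + 1
  else X.ncard

/-- `λ_n(X) = r_n(X) + r_n(E_n − X) − n`: the common value of the connectivity function
of any rank-`n` spike on a non-transversal set `X`. -/
noncomputable def lamN (n : ℕ) (X : Set (En n)) : ℤ :=
  (freeSpikeRank n X : ℤ) + (freeSpikeRank n Xᶜ : ℤ) - (n : ℤ)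

/-- A spiky function: symmetric, extends `λ_n` on non-transversals, takes values in
`{n−2, n−1, n}` on transversals, and satisfies `λ(X) + λ(Y) ≥ 2n−2` for transversals
`X`, `Y` differing in exactly one element. -/
noncomputable def IsSpiky (n : ℕ) (lam : Set (En n) → ℕ) : Prop :=
  (∀ X, lam X = lam Xᶜ) ∧
  (∀ X, ¬ IsTransversal X → (lam X : ℤ) = lamN n X) ∧
  (∀ X, IsTransversal X → lam X = n - 2 ∨ lam X = n - 1 ∨ lam X = n) ∧
  (∀ X Y, IsTransversal X → IsTransversal Y → (symmDiff X Y).ncard = 2 →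
    2 * n - 2 ≤ lam X + lam Y)

/-- A transversal has even parity if `|{i : x_i ∈ X}|` is even. -/
def EvenParity {n : ℕ} (X : Set (En n)) : Prop :=
  Even (Set.ncard {i : Fin n | (i, true) ∈ X})

/-!
Each leg contributes its two elements to the symmetric difference of two transversals, so
adjacent transversals differ on exactly one leg and have opposite parities; since `n` is odd,
so do `X` and `E_n − X`. Two members of `I` cannot be adjacent: two values `n − 2`, or `n − 2`
next to `n − 1`, violate `λ(X) + λ(Y) ≥ 2n − 2`, and two even transversals are never adjacent.
For the formula, `λ(X) = λ(E_n − X)` and exactly one of `X`, `E_n − X` is even, so `I` contains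
both, exactly one, or none of them according as `λ(X)` is `n − 2`, `n − 1` or `n`.
-/

theorem Set.ncard_symmDiff_add_two_mul_ncard_inter {α : Type*} {s t : Set α}
    (hs : s.Finite) (ht : t.Finite) :
    (symmDiff s t).ncard + 2 * (s ∩ t).ncard = s.ncard + t.ncard := by
  have hst : (symmDiff s t).ncard = (s \ t).ncard + (t \ s).ncard :=
    Set.ncard_union_eq disjoint_sdiff_sdiff hs.sdiff ht.sdiff
  have hs' := Set.ncard_inter_add_ncard_sdiff_eq_ncard s t hs
  have ht' := Set.ncard_inter_add_ncard_sdiff_eq_ncard t s ht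
  rw [Set.inter_comm] at ht'
  omega

open Classical in
theorem Set.ncard_inter_pair_of_ne {α : Type*} (S : Set α) {a b : α} (hab : a ≠ b) :
    (S ∩ {a, b}).ncard = (if a ∈ S then 1 else 0) + (if b ∈ S then 1 else 0) := by
  by_cases ha : a ∈ S <;> by_cases hb : b ∈ S
  all_goals simp [Set.inter_insert_of_mem, Set.inter_insert_of_notMem, Set.ncard_pair hab, ha, hb]

namespace IsTransversal

variable {n : ℕ} {X Y : Set (En n)}

theorem compl (hX : IsTransversal X) : IsTransversal Xᶜ := by
  intro i
  rcases hX i with ⟨h1, h2⟩ | ⟨h1, h2⟩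
  · exact Or.inr ⟨not_not.mpr h1, h2⟩
  · exact Or.inl ⟨h1, not_not.mpr h2⟩

theorem ne_compl [NeZero n] (hX : IsTransversal X) : X ≠ Xᶜ := by
  intro h
  rcases hX 0 with ⟨h1, _⟩ | ⟨_, h2⟩
  · exact (h ▸ h1 : (0, true) ∈ Xᶜ) h1
  · exact (h ▸ h2 : (0, false) ∈ Xᶜ) h2

theorem symmDiff_eq_prod_univ (hX : IsTransversal X) (hY : IsTransversal Y) :
    symmDiff X Y = symmDiff {i : Fin n | (i, true) ∈ X} {i | (i, true) ∈ Y} ×ˢ Set.univ := by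
  ext ⟨i, b⟩
  rcases hX i with ⟨h1, h2⟩ | ⟨h1, h2⟩ <;> rcases hY i with ⟨h3, h4⟩ | ⟨h3, h4⟩ <;>
    cases b <;> simp [Set.mem_symmDiff, h1, h2, h3, h4]

theorem evenParity_iff_not_of_ncard_symmDiff_eq_two (hX : IsTransversal X)
    (hY : IsTransversal Y) (h : (symmDiff X Y).ncard = 2) :
    EvenParity X ↔ ¬ EvenParity Y := by
  rw [hX.symmDiff_eq_prod_univ hY, Set.ncard_prod, Set.ncard_univ, Nat.card_eq_fintype_card,
    Fintype.card_bool] at h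
  have := Set.ncard_symmDiff_add_two_mul_ncard_inter
    (Set.toFinite {i : Fin n | (i, true) ∈ X}) (Set.toFinite {i : Fin n | (i, true) ∈ Y})
  simp only [EvenParity, Nat.even_iff]
  omega

end IsTransversal

theorem evenParity_compl_iff {n : ℕ} (hn : Odd n) (X : Set (En n)) :
    EvenParity Xᶜ ↔ ¬ EvenParity X := by
  have hc := Set.ncard_add_ncard_compl {i : Fin n | (i, true) ∈ X}
  rw [Nat.card_eq_fintype_card, Fintype.card_fin] at hc
  obtain ⟨k, hk⟩ := hn
  change Even {i : Fin n | (i, true) ∈ X}ᶜ.ncard ↔ _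
  simp only [EvenParity, Nat.even_iff]
  omega

/-- For odd `n`, the set `I` of transversals `X` with `λ(X) = n−2`, together with the
even-parity transversals with `λ(X) = n−1`, is independent in `H_n`, and
`λ(X) = n − |I ∩ {X, E_n − X}|` for every transversal `X`. -/
theorem stmt14 {n : ℕ} (hn : 2 < n) (hodd : Odd n)
    (lam : Set (En n) → ℕ) (hs : IsSpiky n lam)
    (I : Set (Set (En n)))
    (hI : I = {X | IsTransversal X ∧
      (lam X = n - 2 ∨ (EvenParity X ∧ lam X = n - 1))}) :
    IndepInHn n I ∧
    (∀ X, IsTransversal X → (lam X : ℤ) = (n : ℤ) - ((I ∩ {X, Xᶜ}).ncard : ℤ)) := by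
  obtain ⟨hcompl, -, hvalues, hadj⟩ := hs
  subst hI
  refine ⟨⟨fun X hX => hX.1, ?_⟩, fun X hX => ?_⟩
  · rintro X ⟨hX, hXI⟩ Y ⟨hY, hYI⟩ ⟨-, -, hXY⟩
    have hsum := hadj X Y hX hY hXY
    have hparity := hX.evenParity_iff_not_of_ncard_symmDiff_eq_two hY hXY
    rcases hXI with hXI | ⟨hXe, hXI⟩ <;> rcases hYI with hYI | ⟨hYe, hYI⟩
    · omega
    · omega
    · omega
    · exact hparity.mp hXe hYe
  · have : NeZero n := ⟨by omega⟩
    rw [Set.ncard_inter_pair_of_ne _ hX.ne_compl]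
    have hparity := evenParity_compl_iff hodd X
    rcases hvalues X hX with h | h | h <;> by_cases he : EvenParity X <;>
      simp [hX, hX.compl, ← hcompl X, h, he, hparity] <;> omega
end
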